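/- Under L-action similarity and the candidate-set decomposition: if Q : ℝⁿ → ℝ is L-Lipschitz, a⋆ ∈ ℝⁿ, N ⊆ ℝⁿ finite nonempty, ĝ satisfies |ĝ(a) − Q(a)| ≤ ε on N, and ã ∈ N minimizes |ĝ(a) − Q(a⋆)| over N, then Q(a⋆) − Q(ã) ≤ L(‖α̂ − a⋆‖ + min_{a ∈ N} ‖a − α̂‖) + 2ε for any point α̂ ∈ ℝⁿ. -/

import Mathlib

/-!
The critic picks `ã` by its estimates `ĝ`, which are `ε`-close to `Q` on `N`; so up to `2ε` the
true values `|Q ã - Q a⋆|` are as small as `|Q b - Q a⋆|` for every `b ∈ N`. Taking `b` the point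
of `N` nearest to the proposal `α̂`, Lipschitz continuity and the triangle inequality through `α̂`
bound `|Q b - Q a⋆|` by `L (‖α̂ - a⋆‖ + ‖b - α̂‖)`.
-/

theorem abs_sub_le_of_approx_argmin {α : Type*} {f g : α → ℝ} {c ε : ℝ} {s : Set α}
    (hfg : ∀ a ∈ s, |g a - f a| ≤ ε) {x : α} (hx : x ∈ s)
    (hmin : ∀ a ∈ s, |g x - c| ≤ |g a - c|) {y : α} (hy : y ∈ s) :
    |f x - c| ≤ |f y - c| + 2 * ε := by
  have hx' : |f x - g x| ≤ ε := abs_sub_comm (f x) (g x) ▸ hfg x hx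
  calc |f x - c| ≤ |f x - g x| + |g x - c| := abs_sub_le _ _ _
    _ ≤ |g y - c| + ε := by linarith [hmin y hy]
    _ ≤ |g y - f y| + |f y - c| + ε := by gcongr; exact abs_sub_le _ _ _
    _ ≤ |f y - c| + 2 * ε := by linarith [hfg y hy]

theorem sgf_error_bound_decomposed_general {n : ℕ}
    (Q ghat : EuclideanSpace ℝ (Fin n) → ℝ) (L ε : ℝ) (hL : 0 ≤ L)
    (hLip : ∀ a a' : EuclideanSpace ℝ (Fin n), |Q a - Q a'| ≤ L * ‖a - a'‖)
    (astar : EuclideanSpace ℝ (Fin n))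
    (N : Finset (EuclideanSpace ℝ (Fin n))) (hN : N.Nonempty)
    (hcritic : ∀ a ∈ N, |ghat a - Q a| ≤ ε)
    (atil : EuclideanSpace ℝ (Fin n)) (hatil : atil ∈ N)
    (hmin : ∀ a ∈ N, |ghat atil - Q astar| ≤ |ghat a - Q astar|) :
    ∀ αhat : EuclideanSpace ℝ (Fin n),
      Q astar - Q atil ≤
        L * (‖αhat - astar‖ + N.inf' hN (fun a => ‖a - αhat‖)) + 2 * ε := by
  intro αhat
  obtain ⟨b, hbN, hb⟩ := N.exists_mem_eq_inf' hN (fun a => ‖a - αhat‖)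
  have hselect : |Q atil - Q astar| ≤ |Q b - Q astar| + 2 * ε :=
    abs_sub_le_of_approx_argmin (s := N) hcritic hatil hmin hbN
  have hnearest : |Q b - Q astar| ≤ L * (‖αhat - astar‖ + ‖b - αhat‖) :=
    (hLip b astar).trans <| mul_le_mul_of_nonneg_left
      ((norm_sub_le_norm_sub_add_norm_sub b αhat astar).trans_eq (add_comm _ _)) hL
  rw [hb]
  linarith [neg_abs_le (Q atil - Q astar)]

/-- SLDAS error bound with the actor-error / proposal-radius decomposition:
Q(a⋆) − Q(ã) ≤ L(δ + ψ) + 2ε for any proposal α̂. -/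
theorem sgf_error_bound_decomposed {n : ℕ}
    (Q ghat : EuclideanSpace ℝ (Fin n) → ℝ) (L ε : ℝ) (hL : 0 ≤ L) (hε : 0 ≤ ε)
    (hLip : ∀ a a' : EuclideanSpace ℝ (Fin n), |Q a - Q a'| ≤ L * ‖a - a'‖)
    (astar : EuclideanSpace ℝ (Fin n))
    (N : Finset (EuclideanSpace ℝ (Fin n))) (hN : N.Nonempty)
    (hcritic : ∀ a ∈ N, |ghat a - Q a| ≤ ε)
    (atil : EuclideanSpace ℝ (Fin n)) (hatil : atil ∈ N)
    (hmin : ∀ a ∈ N, |ghat atil - Q astar| ≤ |ghat a - Q astar|) :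
    ∀ αhat : EuclideanSpace ℝ (Fin n),
      Q astar - Q atil ≤
        L * (‖αhat - astar‖ + N.inf' hN (fun a => ‖a - αhat‖)) + 2 * ε :=
  sgf_error_bound_decomposed_general Q ghat L ε hL hLip astar N hN hcritic atil hatil hmin
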